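/- (Equality of scattering energies.) Let 𝓡 be the rotational uniform covering frame on ℝ² with parameters (A, B). For every f ∈ L²(ℝ²): B⁻¹ ∑_{s∈G} ‖(f ⋆ f₀)_s‖²_{L²} + ∑_{k=1}^∞ ∑_{q∈𝒬_k} ∑_{s∈G} ‖(U[sq]f ⋆ f₀)_s‖²_{L²} = ‖f ⋆ f₀‖²_{L²} + ∑_{k=1}^∞ ∑_{p∈𝒢^k} ‖U[p]f ⋆ f₀‖²_{L²}; that is, the L²ℓ² norm of the rotational Fourier scattering transform of f equals the L²ℓ² norm of the Fourier scattering transform of f with respect to the frame 𝓡. -/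

import Mathlib

open MeasureTheory Complex Real

noncomputable section

/-- `m*`: the unique power of two with `m ≤ m* < 2m`. -/
def mstar (m : ℕ) : ℕ := 2 ^ Nat.clog 2 m

/-- The rotation of `ℝ² = ℂ` by the angle `2πj/n`, as a unit complex number. -/
def rotC (n : ℕ) (j : ℕ) : ℂ := Complex.exp (2 * Real.pi * Complex.I * j / n)

/-- The finite rotation group `G_m` (the rotations of `ℝ² = ℂ` by integer multiples of the
angle `2π/(m* B)`), realized as a finset of unit complex numbers.  `G = Gm B 1` consists of
the rotations by integer multiples of `2π/B`. -/
def Gm (B m : ℕ) : Finset ℂ := (Finset.range (mstar m * B)).image (rotC (mstar m * B))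

/-- The real dot product on `ℝ² = ℂ`. -/
def dotR (x ξ : ℂ) : ℝ := (x * (starRingEnd ℂ) ξ).re

/-- The Fourier transform on `ℝ² = ℂ`. -/
def FT (f : ℂ → ℂ) (ξ : ℂ) : ℂ :=
  ∫ x : ℂ, Complex.exp (-(2 * Real.pi * Complex.I) * (dotR x ξ)) * f x

/-- Convolution on `ℝ² = ℂ`. -/
def conv (u v : ℂ → ℂ) (x : ℂ) : ℂ := ∫ y : ℂ, u (x - y) * v y

/-- A rotational uniform covering frame on `ℝ² = ℂ` with parameters `A`, `B`:
the data of the window `η`, the angular windows `β m`, and the Schwartz frame elements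
`f0` and `f m r` (the latter indexed by `m ≥ 1` and `r ∈ G_m`), subject to the defining
properties. -/
structure RotUCF (A : ℝ) (B : ℕ) where
  hA : 0 < A
  hB : 1 ≤ B
  η : ℝ → ℝ
  β : ℕ → ℝ → ℝ
  f0 : SchwartzMap ℂ ℂ
  f : ℕ → ℂ → SchwartzMap ℂ ℂ
  η_nonneg : ∀ x : ℝ, 0 ≤ η x
  η_even : ∀ x : ℝ, η (-x) = η x
  η_smooth : ContDiff ℝ (⊤ : ℕ∞) η
  η_supp : ∀ x : ℝ, A < |x| → η x = 0
  η_partition : ∀ x : ℝ, ∑' k : ℤ, (η (x - A * k)) ^ 2 = 1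
  β_nonneg : ∀ m, ∀ x : ℝ, 0 ≤ β m x
  β_smooth : ∀ m, 1 ≤ m → ContDiff ℝ (⊤ : ℕ∞) (β m)
  β_periodic : ∀ m, 1 ≤ m → Function.Periodic (β m) (2 * Real.pi)
  β_supp : ∀ m, 1 ≤ m → ∀ x : ℝ,
    (∀ k : ℤ, 2 * Real.pi / (mstar m * B) < |x - 2 * Real.pi * k|) → β m x = 0
  β_partition : ∀ m, 1 ≤ m → ∀ x : ℝ,
    ∑ j ∈ Finset.range (mstar m * B), (β m (x - 2 * Real.pi * j / (mstar m * B))) ^ 2 = 1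
  FT_f0 : ∀ ξ : ℂ, FT f0 ξ = ((η ‖ξ‖ : ℝ) : ℂ)
  FT_f : ∀ m, 1 ≤ m → ∀ r ∈ Gm B m, ∀ ξ : ℂ, ξ ≠ 0 →
    FT (f m r) ξ = ((η (‖ξ‖ - m * A) * β m ((r⁻¹ * ξ).arg) : ℝ) : ℂ)
  FT_f_zero : ∀ m, 1 ≤ m → ∀ r ∈ Gm B m, FT (f m r) 0 = 0

variable {A : ℝ} {B : ℕ}

/-- Membership in the index set `𝒢 = {(m, r) : m ≥ 1, r ∈ G_m}`. -/
def validIdx (B : ℕ) (a : ℕ × ℂ) : Prop := 1 ≤ a.1 ∧ a.2 ∈ Gm B a.1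

/-- Membership in the transversal `𝒢₀ = {(m, ρ_{m,j}) : m ≥ 1, 0 ≤ j < m*}` of the
cosets of `G` in `𝒢`. -/
def transIdx (B : ℕ) (a : ℕ × ℂ) : Prop :=
  1 ≤ a.1 ∧ ∃ j < mstar a.1, a.2 = rotC (mstar a.1 * B) j

/-- A list all of whose entries lie in `𝒢`. -/
def ValidList (B : ℕ) (p : List (ℕ × ℂ)) : Prop := ∀ a ∈ p, validIdx B a

/-- The set `𝒢^k` of `k`-tuples of indices, as a type. -/
def Gk (B k : ℕ) : Type := {p : List (ℕ × ℂ) // p.length = k ∧ ValidList B p}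

/-- The set `𝒬_k = 𝒢₀ × 𝒢^{k-1} ⊆ 𝒢^k`, as a type. -/
def Qk (B k : ℕ) : Type :=
  {p : List (ℕ × ℂ) // p.length = k ∧ ValidList B p ∧ transIdx B p.headI}

/-- The set `𝒬[M,k]` of those `q ∈ 𝒬_k` all of whose indices `(m,r)` satisfy `m ≤ M`. -/
def QkM (B M k : ℕ) : Type :=
  {p : List (ℕ × ℂ) // p.length = k ∧ ValidList B p ∧ transIdx B p.headI ∧ ∀ a ∈ p, a.1 ≤ M}

/-- The left action `rp = (rp₁, …, rp_k)` of `r ∈ G` on a tuple of indices,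
where `r(m, s) = (m, rs)`. -/
def actL (r : ℂ) (p : List (ℕ × ℂ)) : List (ℕ × ℂ) := p.map fun a => (a.1, r * a.2)

/-- The rotation `g_r(x) = g(rx)` of a function by `r`. -/
def rotF (r : ℂ) (g : ℂ → ℂ) : ℂ → ℂ := fun x => g (r * x)

/-- The scattering propagator `U[p]f = |⋯||f ⋆ f_{p₁}| ⋆ f_{p₂}|⋯ ⋆ f_{p_k}|`. -/
def U (𝓡 : RotUCF A B) : List (ℕ × ℂ) → (ℂ → ℂ) → (ℂ → ℂ)
  | [], g => g
  | a :: p, g => U 𝓡 p fun x => ((‖conv g (⇑(𝓡.f a.1 a.2)) x‖ : ℝ) : ℂ)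

/-- The zeroth feature map `Φ₀f(x) = B^{-1/2} (∑_{s ∈ G} |(f ⋆ f₀)(sx)|²)^{1/2}`. -/
def Phi0 (𝓡 : RotUCF A B) (g : ℂ → ℂ) : ℂ → ℝ :=
  fun x => (B : ℝ) ^ (-(1 : ℝ) / 2) * Real.sqrt (∑ s ∈ Gm B 1, ‖conv g (⇑𝓡.f0) (s * x)‖ ^ 2)

/-- The feature map `Φ_q f(x) = (∑_{s ∈ G} |(U[sq]f ⋆ f₀)(sx)|²)^{1/2}` for `q ∈ 𝒬_k`. -/
def PhiQ (𝓡 : RotUCF A B) (q : List (ℕ × ℂ)) (g : ℂ → ℂ) : ℂ → ℝ :=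
  fun x => Real.sqrt (∑ s ∈ Gm B 1, ‖conv (U 𝓡 (actL s q) g) (⇑𝓡.f0) (s * x)‖ ^ 2)

end

open scoped ENNReal

noncomputable section
variable {A : ℝ} {B : ℕ}


/-! ### Auxiliary lemmas -/

lemma mstar_pos (m : ℕ) : 0 < mstar m := Nat.pow_pos (by norm_num)

lemma mstar_one : mstar 1 = 1 := by simp [mstar, Nat.clog_one_right]

lemma norm_rotC (n j : ℕ) : ‖rotC n j‖ = 1 := by
  have h : (2 * (Real.pi : ℂ) * Complex.I * j / n)
      = ((2 * Real.pi * j / n : ℝ) : ℂ) * Complex.I := by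
    push_cast; ring
  rw [rotC, h, Complex.norm_exp_ofReal_mul_I]

lemma rotC_ne_zero (n j : ℕ) : rotC n j ≠ 0 := by
  intro h
  have := norm_rotC n j
  rw [h] at this
  simp at this

lemma rotC_add (n a b : ℕ) : rotC n (a + b) = rotC n a * rotC n b := by
  rw [rotC, rotC, rotC, ← Complex.exp_add]
  congr 1
  push_cast
  ring

lemma rotC_mul_self (n : ℕ) (hn : n ≠ 0) (k : ℕ) : rotC n (n * k) = 1 := by
  have hn' : (n : ℂ) ≠ 0 := Nat.cast_ne_zero.2 hn
  have h : (2 * (Real.pi : ℂ) * Complex.I * ((n * k : ℕ) : ℂ) / n)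
      = (k : ℕ) * (2 * Real.pi * Complex.I) := by
    push_cast
    field_simp
  rw [rotC, h, Complex.exp_nat_mul, Complex.exp_two_pi_mul_I, one_pow]

lemma rotC_mod (n j : ℕ) (hn : n ≠ 0) : rotC n (j % n) = rotC n j := by
  conv_rhs => rw [← Nat.div_add_mod j n]
  rw [rotC_add, rotC_mul_self n hn, one_mul]

lemma rotC_inj {n j j' : ℕ} (hj : j < n) (hj' : j' < n) (h : rotC n j = rotC n j') :
    j = j' := by
  have hn : (n : ℂ) ≠ 0 := Nat.cast_ne_zero.2 (by omega)
  rw [rotC, rotC, Complex.exp_eq_exp_iff_exists_int] at h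
  obtain ⟨k, hk⟩ := h
  have hπ : (Real.pi : ℂ) ≠ 0 := by exact_mod_cast Real.pi_ne_zero
  have h0 : (2 * (Real.pi : ℂ) * Complex.I) ≠ 0 := by
    simp [hπ, Complex.I_ne_zero]
  have h2 : (j : ℂ) = (j' : ℂ) + (k : ℂ) * n := by
    apply mul_left_cancel₀ h0
    field_simp at hk
    linear_combination (2 * (Real.pi : ℂ) * Complex.I) * hk
  have h3 : (j : ℤ) = (j' : ℤ) + k * n := by exact_mod_cast h2
  have hj2 : (j : ℤ) < n := by exact_mod_cast hj
  have hj2' : (j' : ℤ) < n := by exact_mod_cast hj'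
  have hj0 : (0 : ℤ) ≤ j := Int.natCast_nonneg j
  have hj0' : (0 : ℤ) ≤ j' := Int.natCast_nonneg j'
  have hn0 : (0 : ℤ) < n := by exact_mod_cast Nat.pos_of_ne_zero (by omega)
  have hk0 : k = 0 := by
    by_contra hne
    rcases lt_or_gt_of_ne hne with hlt | hgt
    · have h4 : k * (n : ℤ) ≤ -1 * n :=
        mul_le_mul_of_nonneg_right (by omega) (by omega)
      linarith
    · have h4 : 1 * (n : ℤ) ≤ k * n :=
        mul_le_mul_of_nonneg_right (by omega) (by omega)
      linarith
  rw [hk0] at h3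
  exact_mod_cast by linarith [h3]

lemma rotC_lift (m b l : ℕ) : rotC b l = rotC (mstar m * b) (mstar m * l) := by
  rw [rotC, rotC]
  rcases Nat.eq_zero_or_pos b with hb | hb
  · subst hb; simp
  · congr 1
    have hm : ((mstar m : ℕ) : ℂ) ≠ 0 := Nat.cast_ne_zero.2 (mstar_pos m).ne'
    push_cast
    rw [mul_div_assoc, mul_div_assoc, mul_div_mul_left _ _ hm]

lemma mem_Gm {b m : ℕ} {r : ℂ} :
    r ∈ Gm b m ↔ ∃ j, j < mstar m * b ∧ rotC (mstar m * b) j = r := by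
  simp [Gm, Finset.mem_image, Finset.mem_range]

lemma mem_Gm_one {b : ℕ} {s : ℂ} : s ∈ Gm b 1 ↔ ∃ l, l < b ∧ rotC b l = s := by
  rw [mem_Gm]
  simp [mstar_one]

lemma norm_of_mem_Gm {b m : ℕ} {r : ℂ} (h : r ∈ Gm b m) : ‖r‖ = 1 := by
  obtain ⟨j, _, rfl⟩ := mem_Gm.1 h
  exact norm_rotC _ _

lemma ne_zero_of_mem_Gm {b m : ℕ} {r : ℂ} (h : r ∈ Gm b m) : r ≠ 0 := by
  intro h0
  have := norm_of_mem_Gm h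
  rw [h0] at this
  simp at this

lemma mul_mem_Gm {b m : ℕ} {s r : ℂ} (hs : s ∈ Gm b 1) (hr : r ∈ Gm b m) :
    s * r ∈ Gm b m := by
  obtain ⟨l, hl, rfl⟩ := mem_Gm_one.1 hs
  obtain ⟨j, hj, rfl⟩ := mem_Gm.1 hr
  have hn : mstar m * b ≠ 0 := Nat.mul_ne_zero (mstar_pos m).ne' (by omega)
  rw [rotC_lift m b l, ← rotC_add, ← rotC_mod _ _ hn]
  exact mem_Gm.2 ⟨_, Nat.mod_lt _ (Nat.pos_of_ne_zero hn), rfl⟩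

lemma inv_mem_Gm_one {b : ℕ} {s : ℂ} (hs : s ∈ Gm b 1) : s⁻¹ ∈ Gm b 1 := by
  obtain ⟨l, hl, rfl⟩ := mem_Gm_one.1 hs
  rcases Nat.eq_zero_or_pos l with hl0 | hl0
  · subst hl0
    have h1 : rotC b 0 = 1 := by simp [rotC]
    rw [h1, inv_one, ← h1]
    exact mem_Gm_one.2 ⟨0, by omega, rfl⟩
  · have h1 : rotC b l * rotC b (b - l) = 1 := by
      rw [← rotC_add, show l + (b - l) = b * 1 by omega]
      exact rotC_mul_self b (by omega) 1
    rw [inv_eq_of_mul_eq_one_right h1]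
    exact mem_Gm_one.2 ⟨b - l, by omega, rfl⟩

lemma decomp_unique {b m l l' j j' : ℕ} (hl : l < b) (hl' : l' < b)
    (hj : j < mstar m) (hj' : j' < mstar m)
    (h : rotC b l * rotC (mstar m * b) j = rotC b l' * rotC (mstar m * b) j') :
    l = l' ∧ j = j' := by
  rw [rotC_lift m b l, rotC_lift m b l', ← rotC_add, ← rotC_add] at h
  have hmp := mstar_pos m
  have hbound : ∀ l₀ j₀ : ℕ, l₀ < b → j₀ < mstar m → mstar m * l₀ + j₀ < mstar m * b := by
    intro l₀ j₀ h1 h2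
    calc mstar m * l₀ + j₀ < mstar m * (l₀ + 1) := by rw [Nat.mul_add, Nat.mul_one]; omega
    _ ≤ mstar m * b := Nat.mul_le_mul_left _ (by omega)
  have heq : mstar m * l + j = mstar m * l' + j' :=
    rotC_inj (hbound l j hl hj) (hbound l' j' hl' hj') h
  have e1 : (mstar m * l + j) / mstar m = l := by
    rw [Nat.mul_add_div hmp, Nat.div_eq_of_lt hj, Nat.add_zero]
  have e1' : (mstar m * l' + j') / mstar m = l' := by
    rw [Nat.mul_add_div hmp, Nat.div_eq_of_lt hj', Nat.add_zero]

  have e2 : (mstar m * l + j) % mstar m = j := by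
    rw [Nat.mul_add_mod, Nat.mod_eq_of_lt hj]
  have e2' : (mstar m * l' + j') % mstar m = j' := by
    rw [Nat.mul_add_mod, Nat.mod_eq_of_lt hj']
  constructor
  · rw [← e1, ← e1', heq]
  · rw [← e2, ← e2', heq]

lemma validList_actL {b : ℕ} {s : ℂ} (hs : s ∈ Gm b 1) {p : List (ℕ × ℂ)}
    (hp : ValidList b p) : ValidList b (actL s p) := by
  intro a ha
  simp only [actL, List.mem_map] at ha
  obtain ⟨c, hc, rfl⟩ := ha
  exact ⟨(hp c hc).1, mul_mem_Gm hs (hp c hc).2⟩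

lemma actL_cancel {s : ℂ} (hs : s ≠ 0) (p : List (ℕ × ℂ)) :
    actL s (actL s⁻¹ p) = p := by
  induction p with
  | nil => rfl
  | cons a t ih =>
    simp only [actL, List.map_cons, List.map_map] at ih ⊢
    rw [mul_inv_cancel_left₀ hs]
    exact congrArg _ (by simpa [actL] using ih)

/-- The map realizing the bijection `G × 𝒬_{k+1} ≃ 𝒢^{k+1}`. -/
def scatMap (b k : ℕ) (x : {s : ℂ // s ∈ Gm b 1} × Qk b (k + 1)) : Gk b (k + 1) :=
  ⟨actL x.1.1 x.2.1, by
    refine ⟨?_, validList_actL x.1.2 x.2.2.2.1⟩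
    simpa [actL] using x.2.2.1⟩

lemma scatMap_bijective (b k : ℕ) : Function.Bijective (scatMap b k) := by
  constructor
  · rintro ⟨⟨s, hs⟩, ⟨p, hp1, hp2, hp3⟩⟩ ⟨⟨s', hs'⟩, ⟨p', hp1', hp2', hp3'⟩⟩ h
    have hl : actL s p = actL s' p' := congrArg Subtype.val h
    obtain ⟨l, hlB, rfl⟩ := mem_Gm_one.1 hs
    obtain ⟨l', hlB', rfl⟩ := mem_Gm_one.1 hs'
    match p, hp1, hp2, hp3, p', hp1', hp2', hp3', hl with
    | (m1, r) :: t, hp1, hp2, hp3, (m2, r') :: t', hp1', hp2', hp3', hl =>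
      have hp3a : 1 ≤ m1 ∧ ∃ j, j < mstar m1 ∧ r = rotC (mstar m1 * b) j := hp3
      have hp3a' : 1 ≤ m2 ∧ ∃ j, j < mstar m2 ∧ r' = rotC (mstar m2 * b) j := hp3'
      obtain ⟨hm1, j, hjlt, ha2⟩ := hp3a
      obtain ⟨hm1', j', hjlt', ha2'⟩ := hp3a'
      simp only [actL, List.map_cons, List.cons.injEq, Prod.mk.injEq] at hl
      obtain ⟨⟨hm, hhead⟩, htail⟩ := hl
      subst hm
      rw [ha2, ha2'] at hhead
      obtain ⟨hll, hjj⟩ := decomp_unique hlB hlB' hjlt hjlt' hhead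
      subst hll
      subst hjj
      have hr : r = r' := ha2.trans ha2'.symm
      subst hr
      have hinj : Function.Injective (fun c : ℕ × ℂ => (c.1, rotC b l * c.2)) := by
        rintro ⟨c1, c2⟩ ⟨d1, d2⟩ hcd
        simp only [Prod.mk.injEq] at hcd
        exact Prod.ext hcd.1 (mul_left_cancel₀ (rotC_ne_zero b l) hcd.2)
      have ht : t = t' := List.map_injective_iff.2 hinj htail
      subst ht
      rfl
  · rintro ⟨p, hp1, hp2⟩
    match p, hp1 with
    | a :: t, hp1 =>
      have hav := hp2 a List.mem_cons_self
      obtain ⟨hm1, ha2⟩ := hav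
      obtain ⟨j', hj', hrot⟩ := mem_Gm.1 ha2
      have hmp := mstar_pos a.1
      have hbpos : 0 < b := by
        rcases Nat.eq_zero_or_pos b with h0 | h0
        · subst h0; rw [Nat.mul_zero] at hj'; omega
        · exact h0
      have hl : j' / mstar a.1 < b := by
        rw [Nat.div_lt_iff_lt_mul hmp]
        calc j' < mstar a.1 * b := hj'
        _ = b * mstar a.1 := Nat.mul_comm _ _
      have hj : j' % mstar a.1 < mstar a.1 := Nat.mod_lt _ hmp
      have hs : rotC b (j' / mstar a.1) ∈ Gm b 1 := mem_Gm_one.2 ⟨_, hl, rfl⟩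
      have hs0 : rotC b (j' / mstar a.1) ≠ 0 := rotC_ne_zero _ _
      have hkey : rotC b (j' / mstar a.1) * rotC (mstar a.1 * b) (j' % mstar a.1) = a.2 := by
        rw [rotC_lift a.1 b, ← rotC_add, Nat.div_add_mod j' (mstar a.1), hrot]
      have hinvhead : (rotC b (j' / mstar a.1))⁻¹ * a.2
          = rotC (mstar a.1 * b) (j' % mstar a.1) := by
        rw [← hkey, inv_mul_cancel_left₀ hs0]
      refine ⟨⟨⟨_, hs⟩, ⟨actL (rotC b (j' / mstar a.1))⁻¹ (a :: t), ?_, ?_, ?_⟩⟩, ?_⟩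
      · simpa [actL] using hp1
      · exact validList_actL (inv_mem_Gm_one hs) hp2
      · exact ⟨hm1, _, hj, hinvhead⟩
      · exact Subtype.ext (actL_cancel hs0 (a :: t))

lemma card_Gm_one (b : ℕ) : (Gm b 1).card = b := by
  rw [Gm, mstar_one, one_mul, Finset.card_image_of_injOn, Finset.card_range]
  intro x hx y hy hxy
  exact rotC_inj (Finset.mem_range.1 hx) (Finset.mem_range.1 hy) hxy

lemma eLpNorm_rotF_eq {s : ℂ} (hs : ‖s‖ = 1) (g : ℂ → ℂ) :
    eLpNorm (rotF s g) 2 volume = eLpNorm g 2 volume := by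
  set a : Circle := ⟨s, mem_sphere_zero_iff_norm.2 hs⟩ with ha
  set e := rotation a with he
  have hmp : MeasurePreserving (⇑e) volume volume := e.measurePreserving
  have hemb : MeasurableEmbedding (⇑e) :=
    e.toHomeomorph.measurableEmbedding
  rw [eLpNorm_eq_lintegral_rpow_enorm_toReal (by norm_num) (by norm_num),
    eLpNorm_eq_lintegral_rpow_enorm_toReal (by norm_num) (by norm_num)]
  congr 1
  have := hmp.lintegral_comp_emb hemb
    (fun x => ‖g x‖ₑ ^ (2 : ℝ≥0∞).toReal)
  simp only [show ∀ x, e x = s * x from fun x => rotation_apply a x] at this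
  simpa [rotF] using this

lemma first_term (hB : 1 ≤ B) (g : ℂ → ℂ) :
    (B : ℝ≥0∞)⁻¹ * ∑ s ∈ Gm B 1, eLpNorm (rotF s g) 2 volume ^ 2
      = eLpNorm g 2 volume ^ 2 := by
  have h : ∀ s ∈ Gm B 1,
      eLpNorm (rotF s g) 2 volume ^ 2 = eLpNorm g 2 volume ^ 2 := fun s hs => by
    rw [eLpNorm_rotF_eq (norm_of_mem_Gm hs)]
  rw [Finset.sum_congr rfl h, Finset.sum_const, card_Gm_one, nsmul_eq_mul, ← mul_assoc,
    ENNReal.inv_mul_cancel (Nat.cast_ne_zero.2 (by omega)) (ENNReal.natCast_ne_top B),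
    one_mul]

lemma key_sum (𝓡 : RotUCF A B) (f : ℂ → ℂ) (k : ℕ) :
    ∑' q : Qk B (k + 1), ∑ s ∈ Gm B 1,
        eLpNorm (rotF s (conv (U 𝓡 (actL s q.1) f) (⇑𝓡.f0))) 2 volume ^ 2
      = ∑' p : Gk B (k + 1),
          eLpNorm (conv (U 𝓡 p.1 f) (⇑𝓡.f0)) 2 volume ^ 2 := by
  set T : List (ℕ × ℂ) → ℝ≥0∞ :=
    fun p => eLpNorm (conv (U 𝓡 p f) (⇑𝓡.f0)) 2 volume ^ 2 with hT
  calc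
    ∑' q : Qk B (k + 1), ∑ s ∈ Gm B 1,
        eLpNorm (rotF s (conv (U 𝓡 (actL s q.1) f) (⇑𝓡.f0))) 2 volume ^ 2
      = ∑' q : Qk B (k + 1), ∑ s ∈ Gm B 1, T (actL s q.1) := by
        refine tsum_congr fun q => Finset.sum_congr rfl fun s hs => ?_
        rw [hT]
        simp only []
        rw [eLpNorm_rotF_eq (norm_of_mem_Gm hs)]
    _ = ∑' q : Qk B (k + 1), ∑' s : {s : ℂ // s ∈ Gm B 1}, T (actL s.1 q.1) := by
        refine tsum_congr fun q => ?_
        exact (Finset.tsum_subtype (Gm B 1) (fun s => T (actL s q.1))).symm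
    _ = ∑' s : {s : ℂ // s ∈ Gm B 1}, ∑' q : Qk B (k + 1), T (actL s.1 q.1) :=
        ENNReal.tsum_comm
    _ = ∑' x : {s : ℂ // s ∈ Gm B 1} × Qk B (k + 1), T (actL x.1.1 x.2.1) :=
        (ENNReal.tsum_prod' (f := fun x : {s : ℂ // s ∈ Gm B 1} × Qk B (k + 1) =>
          T (actL x.1.1 x.2.1))).symm
    _ = ∑' p : Gk B (k + 1), T p.1 :=
        Equiv.tsum_eq (Equiv.ofBijective _ (scatMap_bijective B k)) (fun p => T p.1)


/-- equality of scattering energies: for every `f ∈ L²(ℝ²)`,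
`B⁻¹ ∑_{s∈G} ‖(f ⋆ f₀)_s‖² + ∑_{k≥1} ∑_{q∈𝒬_k} ∑_{s∈G} ‖(U[sq]f ⋆ f₀)_s‖²
  = ‖f ⋆ f₀‖² + ∑_{k≥1} ∑_{p∈𝒢^k} ‖U[p]f ⋆ f₀‖²`;
the L²ℓ² norm of the rotational Fourier scattering transform equals that of the Fourier
scattering transform with respect to the frame `𝓡`. -/
theorem scattering_energy_eq (𝓡 : RotUCF A B) (f : ℂ → ℂ) (hf : MemLp f 2 volume) :
    (B : ℝ≥0∞)⁻¹ * ∑ s ∈ Gm B 1, eLpNorm (rotF s (conv f (⇑𝓡.f0))) 2 volume ^ 2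
        + ∑' k : ℕ, ∑' q : Qk B (k + 1), ∑ s ∈ Gm B 1,
            eLpNorm (rotF s (conv (U 𝓡 (actL s q.1) f) (⇑𝓡.f0))) 2 volume ^ 2
      = eLpNorm (conv f (⇑𝓡.f0)) 2 volume ^ 2
        + ∑' k : ℕ, ∑' p : Gk B (k + 1),
            eLpNorm (conv (U 𝓡 p.1 f) (⇑𝓡.f0)) 2 volume ^ 2 := by
  rw [first_term 𝓡.hB (conv f (⇑𝓡.f0))]
  congr 1
  exact tsum_congr fun k => key_sum 𝓡 f k

end
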